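/- arXiv:1312.3782 — 2 statements merged into one kernel-verified Lean document; each statement's English description precedes it below -/
import Mathlib

section
/- The sequence W_n · √n · (1 - 1/(2n))^{-n} converges to √(e/π) as n → ∞; i.e., W_n ∼ √(e/π) · (1 - 1/(2n))^n / √n. -/
open Real Filter Topology

noncomputable def W (n : ℕ) : ℝ :=
  (∏ k ∈ Finset.range n, (2 * (k : ℝ) + 1)) / (∏ k ∈ Finset.range n, (2 * (k : ℝ) + 2))

lemma W_nonneg (n : ℕ) : 0 ≤ W n := by
  apply div_nonneg <;> exact Finset.prod_nonneg fun k _ => by positivity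

lemma W_succ' (n : ℕ) : W (n + 1) = W n * ((2 * n + 1) / (2 * n + 2)) := by
  unfold W
  rw [Finset.prod_range_succ, Finset.prod_range_succ, div_mul_div_comm]

lemma W_key (n : ℕ) : Real.Wallis.W n * (W n) ^ 2 * (2 * n + 1) = 1 := by
  induction n with
  | zero => simp [W, Real.Wallis.W]
  | succ n ih =>
    have h1 : (2 * (n : ℝ) + 1) ≠ 0 := by positivity
    have h2 : (2 * (n : ℝ) + 2) ≠ 0 := by positivity
    have h3 : (2 * (n : ℝ) + 3) ≠ 0 := by positivity
    rw [Real.Wallis.W_succ, W_succ']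
    push_cast
    have h : Real.Wallis.W n * ((2 * (n : ℝ) + 2) / (2 * n + 1) * ((2 * n + 2) / (2 * n + 3))) *
        (W n * ((2 * n + 1) / (2 * n + 2))) ^ 2 * (2 * (n + 1) + 1) =
        Real.Wallis.W n * (W n) ^ 2 * (2 * n + 1) := by
      field_simp
      ring
    rw [h, ih]

lemma W_sq_mul : Tendsto (fun n : ℕ => (W n) ^ 2 * n) atTop (𝓝 (1 / π)) := by
  have hW : ∀ n : ℕ, (W n) ^ 2 * (2 * n + 1) = (Real.Wallis.W n)⁻¹ := by
    intro n
    have := W_key n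
    rw [mul_assoc] at this
    exact eq_inv_of_mul_eq_one_right this
  have h1 : Tendsto (fun n : ℕ => (Real.Wallis.W n)⁻¹) atTop (𝓝 (π / 2)⁻¹) :=
    Real.Wallis.tendsto_W_nhds_pi_div_two.inv₀ (by positivity)
  have h2 : Tendsto (fun n : ℕ => (n : ℝ) / (2 * n + 1)) atTop (𝓝 (1 / 2)) := by
    have h0 : Tendsto (fun n : ℕ => ((2 : ℝ) + 1 / n)⁻¹) atTop (𝓝 ((2 : ℝ) + 0)⁻¹) :=
      (tendsto_const_nhds.add tendsto_one_div_atTop_nhds_zero_nat).inv₀ (by norm_num)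
    rw [show ((2 : ℝ) + 0)⁻¹ = 1 / 2 by norm_num] at h0
    refine h0.congr' ?_
    filter_upwards [eventually_ge_atTop 1] with n hn
    have hn' : (n : ℝ) ≠ 0 := Nat.cast_ne_zero.mpr (by omega)
    rw [eq_div_iff (by positivity)]
    field_simp
  have h3 := (h1.congr fun n => (hW n).symm).mul h2
  have heq : (π / 2)⁻¹ * (1 / 2) = 1 / π := by
    rw [inv_div]; field_simp
  rw [heq] at h3
  refine h3.congr fun n => ?_
  have : (2 * (n : ℝ) + 1) ≠ 0 := by positivity
  field_simp

theorem wallis_asymptotic :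
    Tendsto (fun n : ℕ => W n * Real.sqrt n / (1 - 1 / (2 * (n : ℝ))) ^ n) atTop
      (𝓝 (Real.sqrt (Real.exp 1 / π))) := by
  have hA : Tendsto (fun n : ℕ => W n * Real.sqrt n) atTop (𝓝 (Real.sqrt (1 / π))) := by
    refine ((Real.continuous_sqrt.tendsto _).comp W_sq_mul).congr fun n => ?_
    simp only [Function.comp_apply]
    rw [Real.sqrt_mul (sq_nonneg _), Real.sqrt_sq (W_nonneg n)]
  have hB : Tendsto (fun n : ℕ => (1 - 1 / (2 * (n : ℝ))) ^ n) atTop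
      (𝓝 (Real.exp (-(1 / 2)))) := by
    refine (Real.tendsto_one_add_div_pow_exp (-(1 / 2))).congr fun n => ?_
    rw [neg_div, ← sub_eq_add_neg, div_div]
  have h := hA.div hB (Real.exp_ne_zero _)
  convert h using 2
  · rfl
  have hπ : Real.sqrt π ≠ 0 := ne_of_gt (Real.sqrt_pos.mpr Real.pi_pos)
  rw [Real.sqrt_div (Real.exp_nonneg 1), Real.sqrt_div (by norm_num : (0:ℝ) ≤ 1),
    ← Real.exp_half, Real.sqrt_one]
  field_simp
  rw [← Real.exp_add]
  norm_num
end

section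
/- The sequence W_n · √n · (1 - 1/(2(n+1/3)))^{-(n+1/3)} converges to √(e/π) as n → ∞; i.e., W_n ∼ √(e/π) · (1 - 1/(2(n+1/3)))^{n+1/3} / √n. -/
open Real Filter Topology

lemma W_pos' (n : ℕ) : 0 < W n := by
  apply div_pos <;> exact Finset.prod_pos (fun k _ => by positivity)

lemma wallis_rel (n : ℕ) : Real.Wallis.W n = 1 / (W n ^ 2 * (2 * n + 1)) := by
  induction n with
  | zero => simp [Real.Wallis.W, W]
  | succ n ih =>
    have hW := W_pos' n
    have hWs : W (n + 1) = W n * ((2 * n + 1) / (2 * n + 2)) := by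
      unfold W
      rw [Finset.prod_range_succ, Finset.prod_range_succ, div_mul_div_comm]
    rw [Real.Wallis.W_succ, ih, hWs]
    have h1 : (2 * (n : ℝ) + 1) ≠ 0 := by positivity
    have h2 : (2 * (n : ℝ) + 2) ≠ 0 := by positivity
    have h3 : (2 * (n : ℝ) + 3) ≠ 0 := by positivity
    push_cast
    field_simp
    ring

lemma sqrt_tendsto : Tendsto (fun n : ℕ => W n * Real.sqrt n) atTop (𝓝 (Real.sqrt (1 / π))) := by
  have h1 : Tendsto (fun n : ℕ => W n ^ 2 * (2 * n + 1)) atTop (𝓝 (2 / π)) := by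
    have := (Real.Wallis.tendsto_W_nhds_pi_div_two).inv₀ (by positivity)
    simp only [wallis_rel, one_div, inv_inv] at this
    have h2 : (π / 2)⁻¹ = 2 / π := by rw [inv_div]
    rwa [h2] at this
  have h2 : Tendsto (fun n : ℕ => (n : ℝ) / (2 * n + 1)) atTop (𝓝 (1 / 2)) := by
    have hx : Tendsto (fun n : ℕ => 2 + 1 / (n : ℝ)) atTop (𝓝 (2 + 0)) :=
      tendsto_const_nhds.add tendsto_one_div_atTop_nhds_zero_nat
    have := hx.inv₀ (by norm_num)
    norm_num at this
    apply this.congr'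
    filter_upwards [eventually_gt_atTop 0] with n hn
    have hn' : (n : ℝ) ≠ 0 := Nat.cast_ne_zero.mpr hn.ne'
    field_simp
  have h3 : Tendsto (fun n : ℕ => W n ^ 2 * n) atTop (𝓝 (1 / π)) := by
    have := h1.mul h2
    have he : (2 / π) * (1 / 2) = 1 / π := by ring
    rw [he] at this
    apply this.congr'
    filter_upwards [eventually_gt_atTop 0] with n hn
    have : (2 * (n : ℝ) + 1) ≠ 0 := by positivity
    field_simp
  have h4 := h3.sqrt
  apply h4.congr
  intro n
  rw [Real.sqrt_mul (by positivity), Real.sqrt_sq (W_pos' n).le]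

lemma denom_tendsto : Tendsto (fun n : ℕ =>
    (1 - 1 / (2 * ((n : ℝ) + 1/3))) ^ ((n : ℝ) + 1/3)) atTop (𝓝 (Real.exp (-(1/2)))) := by
  have h0 : Tendsto (fun n : ℕ => (n : ℝ) + 1/3) atTop atTop :=
    tendsto_atTop_add_const_right _ _ tendsto_natCast_atTop_atTop
  have := (tendsto_one_add_div_rpow_exp (-(1/2))).comp h0
  apply this.congr
  intro n
  simp only [Function.comp]
  congr 2
  field_simp

theorem wallis_asymptotic_third :
    Tendsto (fun n : ℕ =>
        W n * Real.sqrt n / (1 - 1 / (2 * ((n : ℝ) + 1/3))) ^ ((n : ℝ) + 1/3)) atTop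
      (𝓝 (Real.sqrt (Real.exp 1 / π))) := by
  have h := sqrt_tendsto.div denom_tendsto (Real.exp_ne_zero _)
  have heq : Real.sqrt (1 / π) / Real.exp (-(1/2)) = Real.sqrt (Real.exp 1 / π) := by
    rw [Real.exp_neg, Real.exp_half, div_inv_eq_mul,
      ← Real.sqrt_mul (by positivity), one_div, inv_mul_eq_div]
  rwa [heq] at h
end
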